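/- For the qubit dephasing noise N(ρ) = (ρ + σ_3 ρ σ_3)/2, every ex-ante/ex-post protocol {(I_ω, C_ω)} satisfies Σ_ω Tr_HS(C_ω ∘ N ∘ I_ω) ≤ 2, and hence the average fidelity satisfies F̄ ≤ 2/3; moreover both the do-nothing protocol and the discriminate-and-reprepare protocol in the σ_3 eigenbasis achieve F̄ = 2/3. -/

import Mathlib

/-! Dephasing passes only the diagonal of its input, so
`Tr (C ∘ N ∘ I) = ∑ₖ Tr (C(|k⟩⟨k|) · Bₖᵀ)`, where `Bₖ = (I(|i⟩⟨j|)ₖₖ)ᵢⱼ` is a principal block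
of the Choi matrix of `I` and hence positive semidefinite. For positive semidefinite `P`, `Q` one
has `Tr (P Q) ≤ Tr P · Tr Q` (since `P ≤ Tr P · 1`), and `C(|k⟩⟨k|)` is a state, so each protocol
branch contributes at most `∑ₖ Tr Bₖ = Tr I_ω(1)`; these add up to `Tr 1 = 2`. -/

open Matrix ComplexOrder

/-- `id_n ⊗ Φ`. -/
noncomputable def applyBlocks {d : ℕ} (n : ℕ)
    (Φ : Matrix (Fin d) (Fin d) ℂ →ₗ[ℂ] Matrix (Fin d) (Fin d) ℂ)
    (M : Matrix (Fin n × Fin d) (Fin n × Fin d) ℂ) :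
    Matrix (Fin n × Fin d) (Fin n × Fin d) ℂ :=
  Matrix.of fun p q => Φ (Matrix.of fun i j => M (p.1, i) (q.1, j)) p.2 q.2

/-- Complete positivity. -/
def IsCP {d : ℕ}
    (Φ : Matrix (Fin d) (Fin d) ℂ →ₗ[ℂ] Matrix (Fin d) (Fin d) ℂ) : Prop :=
  ∀ (n : ℕ) (M : Matrix (Fin n × Fin d) (Fin n × Fin d) ℂ),
    M.PosSemidef → (applyBlocks n Φ M).PosSemidef

/-- Trace preservation. -/
def IsTP {d : ℕ}
    (Φ : Matrix (Fin d) (Fin d) ℂ →ₗ[ℂ] Matrix (Fin d) (Fin d) ℂ) : Prop :=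
  ∀ X, (Φ X).trace = X.trace

/-- An ex-ante/ex-post protocol. -/
def IsProtocol {d m : ℕ}
    (I C : Fin m → (Matrix (Fin d) (Fin d) ℂ →ₗ[ℂ] Matrix (Fin d) (Fin d) ℂ)) : Prop :=
  (∀ ω, IsCP (I ω)) ∧ (∀ X, ∑ ω, ((I ω) X).trace = X.trace) ∧
    (∀ ω, IsCP (C ω) ∧ IsTP (C ω))

/-- Average fidelity `F̄ = (2 + Σ_ω Tr_HS (C_ω ∘ N ∘ I_ω))/6` for a qubit. -/
noncomputable def avgFid
    (N : Matrix (Fin 2) (Fin 2) ℂ →ₗ[ℂ] Matrix (Fin 2) (Fin 2) ℂ) {m : ℕ}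
    (I C : Fin m → (Matrix (Fin 2) (Fin 2) ℂ →ₗ[ℂ] Matrix (Fin 2) (Fin 2) ℂ)) : ℝ :=
  ((2 : ℝ) + ∑ ω, (LinearMap.trace ℂ (Matrix (Fin 2) (Fin 2) ℂ)
      ((C ω) ∘ₗ N ∘ₗ (I ω))).re) / 6

/-- `σ_3`. -/
noncomputable def sigma3 : Matrix (Fin 2) (Fin 2) ℂ := !![1, 0; 0, -1]

/-- The qubit dephasing channel `N(ρ) = (ρ + σ_3 ρ σ_3)/2`. -/
noncomputable def dephasing : Matrix (Fin 2) (Fin 2) ℂ →ₗ[ℂ] Matrix (Fin 2) (Fin 2) ℂ :=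
  (1 / 2 : ℂ) • (LinearMap.id +
    (LinearMap.mulLeft ℂ sigma3).comp (LinearMap.mulRight ℂ sigma3))

/-- The spectral projections of `σ_3`. -/
noncomputable def Pk : Fin 2 → Matrix (Fin 2) (Fin 2) ℂ :=
  ![!![1, 0; 0, 0], !![0, 0; 0, 1]]

/-- Discriminate-and-reprepare in the `σ_3` eigenbasis. -/
noncomputable def drInstr (ω : Fin 2) :
    Matrix (Fin 2) (Fin 2) ℂ →ₗ[ℂ] Matrix (Fin 2) (Fin 2) ℂ :=
  (LinearMap.mulLeft ℂ (Pk ω)).comp (LinearMap.mulRight ℂ (Pk ω))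

noncomputable def drCorr (ω : Fin 2) :
    Matrix (Fin 2) (Fin 2) ℂ →ₗ[ℂ] Matrix (Fin 2) (Fin 2) ℂ :=
  (Matrix.traceLinearMap (Fin 2) ℂ ℂ).smulRight (Pk ω)

namespace Matrix.PosSemidef
variable {n 𝕜 : Type*} [Fintype n] [RCLike 𝕜] {P Q : Matrix n n 𝕜}

theorem trace_mul_nonneg (hP : P.PosSemidef) (hQ : Q.PosSemidef) : 0 ≤ (P * Q).trace := by
  classical
  open scoped MatrixOrder in
  obtain ⟨B, rfl⟩ := CStarAlgebra.nonneg_iff_eq_star_mul_self.mp hP.nonneg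
  rw [star_eq_conjTranspose, Matrix.mul_assoc, trace_mul_comm]
  exact (hQ.mul_mul_conjTranspose_same B).trace_nonneg

theorem trace_smul_one_sub [DecidableEq n] (hP : P.PosSemidef) :
    (P.trace • (1 : Matrix n n 𝕜) - P).PosSemidef := by
  have hconj : P.trace • (1 : Matrix n n 𝕜) - P = Unitary.conjStarAlgAut 𝕜 _
      hP.1.eigenvectorUnitary (diagonal fun i => P.trace - hP.1.eigenvalues i) := by
    nth_rw 2 [hP.1.spectral_theorem]
    rw [← diagonal_sub, ← smul_one_eq_diagonal, map_sub, map_smul, map_one]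
    rfl
  rw [hconj, Unitary.conjStarAlgAut_apply,
    Unitary.isUnit_coe.posSemidef_star_right_conjugate_iff, posSemidef_diagonal_iff]
  intro i
  rw [hP.1.trace_eq_sum_eigenvalues, sub_nonneg]
  exact Finset.single_le_sum (f := fun j => (hP.1.eigenvalues j : 𝕜))
    (fun j _ => RCLike.ofReal_nonneg.mpr (hP.eigenvalues_nonneg j)) (Finset.mem_univ i)

theorem trace_mul_le [DecidableEq n] (hP : P.PosSemidef) (hQ : Q.PosSemidef) :
    (P * Q).trace ≤ P.trace * Q.trace := by
  have := hP.trace_smul_one_sub.trace_mul_nonneg hQ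
  rwa [Matrix.sub_mul, trace_sub, smul_mul_assoc, Matrix.one_mul, trace_smul, smul_eq_mul,
    sub_nonneg] at this

end Matrix.PosSemidef

theorem Matrix.posSemidef_single_one {n 𝕜 : Type*} [Fintype n] [DecidableEq n] [RCLike 𝕜]
    (i : n) : (single i i (1 : 𝕜)).PosSemidef := by
  rw [← diagonal_single, posSemidef_diagonal_iff]
  intro j
  by_cases h : j = i <;> simp [h]

theorem LinearMap.trace_eq_sum_single {n R : Type*} [Fintype n] [DecidableEq n] [CommRing R]
    (Φ : Matrix n n R →ₗ[R] Matrix n n R) :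
    LinearMap.trace R (Matrix n n R) Φ = ∑ i, ∑ j, Φ (Matrix.single i j 1) i j := by
  rw [LinearMap.trace_eq_matrix_trace R (Matrix.stdBasis R n n), Matrix.trace,
    ← Finset.univ_product_univ, Finset.sum_product]
  simp [LinearMap.toMatrix_apply, Matrix.stdBasis, Matrix.single_eq_of_single_single]

noncomputable def choiBlock {d : ℕ}
    (Φ : Matrix (Fin d) (Fin d) ℂ →ₗ[ℂ] Matrix (Fin d) (Fin d) ℂ) (k : Fin d) :
    Matrix (Fin d) (Fin d) ℂ :=
  Matrix.of fun i j => Φ (single i j 1) k k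

namespace IsCP
variable {d : ℕ} {Φ : Matrix (Fin d) (Fin d) ℂ →ₗ[ℂ] Matrix (Fin d) (Fin d) ℂ}

theorem posSemidef_map (h : IsCP Φ) {X : Matrix (Fin d) (Fin d) ℂ} (hX : X.PosSemidef) :
    (Φ X).PosSemidef :=
  (h 1 _ (hX.submatrix Prod.snd)).submatrix fun i => ((0 : Fin 1), i)

theorem posSemidef_choi (h : IsCP Φ) :
    (Matrix.of fun p q : Fin d × Fin d => Φ (single p.1 q.1 1) p.2 q.2).PosSemidef := by
  -- `Bᴴ * B = ∑ᵢⱼ |i i⟩⟨j j|` is the unnormalised maximally entangled state.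
  let B : Matrix (Fin 1) (Fin d × Fin d) ℂ := Matrix.of fun _ p => if p.1 = p.2 then 1 else 0
  convert h d _ (posSemidef_conjTranspose_mul_self B) using 1
  ext p q
  simp only [applyBlocks, Matrix.of_apply]
  refine congrFun (congrFun (congrArg Φ ?_) _) _
  ext a b
  by_cases ha : p.1 = a <;> by_cases hb : q.1 = b <;> simp [B, Matrix.mul_apply, ha, hb]

theorem posSemidef_choiBlock (h : IsCP Φ) (k : Fin d) : (choiBlock Φ k).PosSemidef :=
  h.posSemidef_choi.submatrix fun i => (i, k)

end IsCP

theorem sum_trace_choiBlock {d : ℕ}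
    (Φ : Matrix (Fin d) (Fin d) ℂ →ₗ[ℂ] Matrix (Fin d) (Fin d) ℂ) :
    ∑ k, (choiBlock Φ k).trace = (Φ 1).trace := by
  rw [← sum_single_one, map_sum, trace_sum]
  simp only [choiBlock, Matrix.trace, Matrix.diag_apply, Matrix.of_apply]
  exact Finset.sum_comm

theorem dephasing_apply (X : Matrix (Fin 2) (Fin 2) ℂ) :
    dephasing X = ∑ k, X k k • single k k 1 := by
  ext i j
  fin_cases i <;> fin_cases j <;>
    simp [dephasing, sigma3, Matrix.mul_apply, Matrix.vecMul, dotProduct, Fin.sum_univ_two] <;>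
    ring

theorem trace_comp_dephasing_comp
    (C I : Matrix (Fin 2) (Fin 2) ℂ →ₗ[ℂ] Matrix (Fin 2) (Fin 2) ℂ) :
    LinearMap.trace ℂ _ (C ∘ₗ dephasing ∘ₗ I) =
      ∑ k, (C (single k k 1) * (choiBlock I k)ᵀ).trace := by
  simp only [LinearMap.trace_eq_sum_single, LinearMap.comp_apply, dephasing_apply, map_add,
    map_smul, Matrix.trace, Matrix.diag_apply, Matrix.mul_apply, choiBlock, Matrix.transpose_apply,
    Matrix.of_apply, Fin.sum_univ_two, Matrix.add_apply, Matrix.smul_apply, smul_eq_mul]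
  ring

theorem trace_comp_dephasing_comp_le
    {C I : Matrix (Fin 2) (Fin 2) ℂ →ₗ[ℂ] Matrix (Fin 2) (Fin 2) ℂ}
    (hC : IsCP C) (hCtp : IsTP C) (hI : IsCP I) :
    LinearMap.trace ℂ _ (C ∘ₗ dephasing ∘ₗ I) ≤ (I 1).trace := by
  rw [trace_comp_dephasing_comp, ← sum_trace_choiBlock]
  refine Finset.sum_le_sum fun k _ => ?_
  calc (C (single k k 1) * (choiBlock I k)ᵀ).trace
      ≤ (C (single k k 1)).trace * (choiBlock I k)ᵀ.trace :=
        (hC.posSemidef_map (posSemidef_single_one k)).trace_mul_le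
          (hI.posSemidef_choiBlock k).transpose
    _ = (choiBlock I k).trace := by rw [hCtp, trace_single_eq_same, trace_transpose, one_mul]

theorem IsProtocol.sum_re_trace_comp_dephasing_comp_le {m : ℕ}
    {I C : Fin m → (Matrix (Fin 2) (Fin 2) ℂ →ₗ[ℂ] Matrix (Fin 2) (Fin 2) ℂ)}
    (h : IsProtocol I C) :
    ∑ ω, (LinearMap.trace ℂ _ (C ω ∘ₗ dephasing ∘ₗ I ω)).re ≤ 2 := by
  obtain ⟨hI, hItr, hC⟩ := h
  have hle : ∑ ω, LinearMap.trace ℂ _ (C ω ∘ₗ dephasing ∘ₗ I ω) ≤ 2 :=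
    calc ∑ ω, LinearMap.trace ℂ _ (C ω ∘ₗ dephasing ∘ₗ I ω)
        ≤ ∑ ω, (I ω 1).trace :=
          Finset.sum_le_sum fun ω _ => trace_comp_dephasing_comp_le (hC ω).1 (hC ω).2 (hI ω)
      _ = 2 := by rw [hItr, trace_one]; norm_num
  rw [← Complex.re_sum]
  exact_mod_cast (Complex.le_def.mp hle).1

theorem trace_dephasing : LinearMap.trace ℂ _ dephasing = 2 := by
  norm_num [LinearMap.trace_eq_sum_single, dephasing_apply, Fin.sum_univ_two]

theorem trace_drCorr_comp_dephasing_comp_drInstr (ω : Fin 2) :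
    LinearMap.trace ℂ _ (drCorr ω ∘ₗ dephasing ∘ₗ drInstr ω) = 1 := by
  fin_cases ω <;>
    simp [LinearMap.trace_eq_sum_single, dephasing_apply, drCorr, drInstr, Pk, Fin.sum_univ_two,
      Matrix.mul_apply, Matrix.vecMul, dotProduct]

/-- against dephasing noise every protocol satisfies
    `Σ_ω Tr_HS (C_ω ∘ N ∘ I_ω) ≤ 2`, hence `F̄ ≤ 2/3`; both the do-nothing
    protocol and discriminate-and-reprepare in the `σ_3` eigenbasis
    achieve `F̄ = 2/3`. -/
theorem stmt14 :
    (∀ (m : ℕ) (I C : Fin m → (Matrix (Fin 2) (Fin 2) ℂ →ₗ[ℂ] Matrix (Fin 2) (Fin 2) ℂ)),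
      IsProtocol I C →
        (∑ ω, (LinearMap.trace ℂ (Matrix (Fin 2) (Fin 2) ℂ)
            ((C ω) ∘ₗ dephasing ∘ₗ (I ω))).re) ≤ 2 ∧
        avgFid dephasing I C ≤ 2 / 3) ∧
    avgFid dephasing (fun _ : Fin 1 => LinearMap.id) (fun _ => LinearMap.id) = 2 / 3 ∧
    avgFid dephasing drInstr drCorr = 2 / 3 := by
  refine ⟨fun m I C h => ?_, ?_, ?_⟩
  · have hsum := h.sum_re_trace_comp_dephasing_comp_le
    exact ⟨hsum, by rw [avgFid]; linarith⟩
  · simp only [avgFid, LinearMap.id_comp, LinearMap.comp_id, trace_dephasing, Fin.sum_univ_one]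
    norm_num
  · simp only [avgFid, Fin.sum_univ_two, trace_drCorr_comp_dephasing_comp_drInstr]
    norm_num
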